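/- Let X be a set, H a Hilbert space, and a a bounded operator on ℓ²(X) ⊗ H. For every ε > 0 there exist isometries V, W : ℓ²(X) → ℓ²(X) ⊗ H such that for every x ∈ X, V δ_x and W δ_x lie in ℂδ_x ⊗ H, and (1 − ε)‖a‖ ≤ ‖W* a V‖ ≤ ‖a‖. -/

import Mathlib

/-!
A field `η` of unit vectors of `H` gives the diagonal isometry `f ↦ (x ↦ f x • η x)` from
`ℓ²(X)` to `ℓ²(X, H)`, and every `ζ ∈ ℓ²(X, H)` lies in the range of one of them: take
`η x = ζ x / ‖ζ x‖` (or any unit vector where `ζ x = 0`) and `f x = ‖ζ x‖`, so `‖f‖ = ‖ζ‖`.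
Factoring a near-maximising pair `ζ₁ = V f₁`, `ζ₂ = W f₂` for `|⟪ζ₂, a ζ₁⟫|` in this way gives
`⟪f₂, W* a V f₁⟫ = ⟪ζ₂, a ζ₁⟫`, whence the lower bound; the upper bound holds because `V`
and `W*` are contractions.
-/

/- ℓ²(X, H) is modeled as `lp (fun _ : X => H) 2`; `delta x` is the standard
basis vector δ_x of ℓ²(X) = ℓ²(X, ℂ); `projSet s` is the orthogonal projection
of ℓ²(X, H) onto the coordinates in the finite set `s` (for a ball `N(x,S)` this
is the projection `P_x` onto ℓ²(N(x,S))).  The matrix coefficient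
a_{y,z} = ⟨a δ_z, δ_y⟩ (linear in the first variable, as in the paper) is
`⟪delta y, a (delta z)⟫_ℂ` in Mathlib's convention (conjugate-linear in the
first slot), and the mathematicians' inner product ⟨u, v⟩ is `⟪v, u⟫_ℂ`. -/

noncomputable section
open scoped InnerProductSpace ComplexOrder ENNReal

attribute [local instance] Classical.propDecidable

abbrev l2 (X : Type*) (H : Type*) [NormedAddCommGroup H] [InnerProductSpace ℂ H] :
    Type _ := lp (fun _ : X => H) 2

variable {X : Type*} {H : Type*} [NormedAddCommGroup H] [InnerProductSpace ℂ H]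

/-- standard basis vector δ_x of ℓ²(X). -/
def delta (x : X) : l2 X ℂ := lp.single 2 x 1

/-- evaluation at a point, as a continuous linear map ℓ²(X,H) → H. -/
def evalCLM (x : X) : l2 X H →L[ℂ] H :=
  LinearMap.mkContinuous
    { toFun := fun f => f x
      map_add' := fun f g => by simp [lp.coeFn_add]
      map_smul' := fun c f => by simp [lp.coeFn_smul] }
    1 (fun f => by simp only [LinearMap.coe_mk, AddHom.coe_mk, one_mul]; exact lp.norm_apply_le_norm (by norm_num) f x)

/-- insertion at a point, as a continuous linear map H → ℓ²(X,H). -/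
def singleCLM (x : X) : H →L[ℂ] l2 X H :=
  LinearMap.mkContinuous
    { toFun := fun v => lp.single 2 x v
      map_add' := fun v w => by
        apply lp.ext
        funext j
        by_cases h : j = x
        · subst h; simp [lp.single_apply_self, lp.coeFn_add]
        · simp [lp.single_apply_ne 2 x _ h, lp.coeFn_add]
      map_smul' := fun c v => by simpa using lp.single_smul 2 x v c }
    1 (fun v => by
      have : ‖(lp.single 2 x v : l2 X H)‖ = ‖v‖ := by
        simpa using lp.norm_single (p := 2) (by norm_num) (fun _ : X => v) x
      simp [this])

/-- orthogonal projection of ℓ²(X,H) onto the coordinates in a finite set. -/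
def projSet (s : Finset X) : l2 X H →L[ℂ] l2 X H :=
  ∑ y ∈ s, (singleCLM y) ∘L (evalCLM y)

theorem lp.norm_eq_of_forall_norm_apply_eq {ι : Type*} {E F : ι → Type*}
    [∀ i, NormedAddCommGroup (E i)] [∀ i, NormedAddCommGroup (F i)] {p : ℝ≥0∞} (hp : p ≠ 0)
    {x : lp E p} {y : lp F p} (h : ∀ i, ‖x i‖ = ‖y i‖) : ‖x‖ = ‖y‖ :=
  le_antisymm (lp.norm_mono hp fun i => (h i).le) (lp.norm_mono hp fun i => (h i).ge)

section Diagonal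

variable {ι E : Type*} [NormedAddCommGroup E] {p : ℝ≥0∞} [Fact (1 ≤ p)]

def diagonalIsometry {𝕜 : Type*} [NormedField 𝕜] [NormedSpace 𝕜 E] (η : ι → E)
    (hη : ∀ i, ‖η i‖ = 1) : lp (fun _ : ι => 𝕜) p →ₗᵢ[𝕜] lp (fun _ : ι => E) p where
  toFun f := ⟨fun i => f i • η i, (lp.memℓp f).mono' fun i => by rw [norm_smul, hη, mul_one]⟩
  map_add' f g := lp.ext <| funext fun i => add_smul (f i) (g i) (η i)
  map_smul' c f := lp.ext <| funext fun i => smul_assoc c (f i) (η i)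
  norm_map' f := lp.norm_eq_of_forall_norm_apply_eq (zero_lt_one.trans_le Fact.out).ne'
    fun i => (norm_smul (f i) (η i)).trans (by rw [hη, mul_one])

@[simp]
theorem diagonalIsometry_apply {𝕜 : Type*} [NormedField 𝕜] [NormedSpace 𝕜 E] (η : ι → E)
    (hη : ∀ i, ‖η i‖ = 1) (f : lp (fun _ : ι => 𝕜) p) (i : ι) :
    diagonalIsometry η hη f i = f i • η i :=
  rfl

theorem diagonalIsometry_single {𝕜 : Type*} [NormedField 𝕜] [NormedSpace 𝕜 E] (η : ι → E)
    (hη : ∀ i, ‖η i‖ = 1) (i : ι) (c : 𝕜) :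
    diagonalIsometry η hη (lp.single p i c) = lp.single p i (c • η i) := by
  ext j
  rcases eq_or_ne j i with rfl | hji
  · simp
  · simp [hji]

theorem exists_diagonalIsometry_apply_eq {𝕜 : Type*} [RCLike 𝕜] [NormedSpace 𝕜 E]
    {η₀ : E} (hη₀ : ‖η₀‖ = 1) (ζ : lp (fun _ : ι => E) p) :
    ∃ (η : ι → E) (hη : ∀ i, ‖η i‖ = 1) (f : lp (fun _ : ι => 𝕜) p),
      ‖f‖ = ‖ζ‖ ∧ diagonalIsometry η hη f = ζ := by
  let η (i : ι) : E := if ζ i = 0 then η₀ else (‖ζ i‖⁻¹ : 𝕜) • ζ i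
  have hη (i : ι) : ‖η i‖ = 1 := by
    by_cases h : ζ i = 0
    · simpa [η, h] using hη₀
    · simp [η, h, norm_smul]
  let f : lp (fun _ : ι => 𝕜) p := ⟨fun i => (‖ζ i‖ : 𝕜), (lp.memℓp ζ).mono' fun i => by simp⟩
  refine ⟨η, hη, f, lp.norm_eq_of_forall_norm_apply_eq (zero_lt_one.trans_le Fact.out).ne'
    fun i => by simp [f], ?_⟩
  ext i
  by_cases h : ζ i = 0
  · simp [f, h]
  · simp [f, η, h, smul_smul]

end Diagonal

section InnerProduct

variable {𝕜 E F G K : Type*} [RCLike 𝕜] [NormedAddCommGroup E] [InnerProductSpace 𝕜 E]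
  [NormedAddCommGroup F] [InnerProductSpace 𝕜 F]

theorem norm_inner_apply_le_opNorm (B : E →L[𝕜] F) {x : E} {y : F} (hx : ‖x‖ ≤ 1)
    (hy : ‖y‖ ≤ 1) : ‖⟪y, B x⟫_𝕜‖ ≤ ‖B‖ :=
  calc ‖⟪y, B x⟫_𝕜‖ ≤ ‖y‖ * ‖B x‖ := norm_inner_le_norm y (B x)
    _ ≤ 1 * ‖B‖ := mul_le_mul hy (B.unit_le_opNorm x hx) (norm_nonneg _) zero_le_one
    _ = ‖B‖ := one_mul _

theorem exists_norm_inner_apply_ge (a : E →L[𝕜] F) {ε : ℝ} (hε : 0 < ε) :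
    ∃ x y, ‖x‖ ≤ 1 ∧ ‖y‖ ≤ 1 ∧ (1 - ε) * ‖a‖ ≤ ‖⟪y, a x⟫_𝕜‖ := by
  rcases (norm_nonneg a).eq_or_lt with ha | ha
  · exact ⟨0, 0, by simp, by simp, by simp [← ha]⟩
  obtain ⟨x, hx, hax⟩ := a.exists_lt_apply_of_lt_opNorm (by nlinarith : (1 - ε) * ‖a‖ < ‖a‖)
  refine ⟨x, (‖a x‖⁻¹ : 𝕜) • a x, hx.le, ?_, hax.le.trans_eq ?_⟩
  · simp only [norm_smul, norm_inv, norm_algebraMap', norm_norm]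
    exact inv_mul_le_one_of_le₀ le_rfl (norm_nonneg _)
  · rw [inner_smul_left, inner_self_eq_norm_sq_to_K]
    rcases eq_or_ne ‖a x‖ 0 with h | h <;> simp [h, sq]

variable [NormedAddCommGroup G] [InnerProductSpace 𝕜 G] [CompleteSpace G]
  [NormedAddCommGroup K] [InnerProductSpace 𝕜 K] [CompleteSpace K]

theorem norm_adjoint_comp_comp_le (V : E →ₗᵢ[𝕜] F) (W : K →ₗᵢ[𝕜] G) (a : F →L[𝕜] G) :
    ‖W.toContinuousLinearMap.adjoint ∘L a ∘L V.toContinuousLinearMap‖ ≤ ‖a‖ := by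
  have hV := V.norm_toContinuousLinearMap_le
  have hW : ‖W.toContinuousLinearMap.adjoint‖ ≤ 1 := by
    rw [ContinuousLinearMap.adjoint.norm_map]
    exact W.norm_toContinuousLinearMap_le
  calc _ ≤ ‖W.toContinuousLinearMap.adjoint‖ * (‖a‖ * ‖V.toContinuousLinearMap‖) :=
        (ContinuousLinearMap.opNorm_comp_le _ _).trans
          (by gcongr; exact ContinuousLinearMap.opNorm_comp_le _ _)
    _ ≤ 1 * (‖a‖ * 1) := by gcongr
    _ = ‖a‖ := by ring

end InnerProduct

/-- for any bounded operator a on ℓ²(X) ⊗ H = ℓ²(X, H) and ε > 0 there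
are diagonal isometries V, W : ℓ²(X) → ℓ²(X, H) (V δ_x ∈ ℂδ_x ⊗ H) with
(1 − ε)‖a‖ ≤ ‖W* a V‖ ≤ ‖a‖. -/
theorem stmt4 {X : Type*} {H : Type*} [NormedAddCommGroup H] [InnerProductSpace ℂ H]
    [CompleteSpace H] (hH : ∃ η : H, ‖η‖ = 1)
    (a : l2 X H →L[ℂ] l2 X H) (ε : ℝ) (hε : 0 < ε) :
    ∃ V W : l2 X ℂ →L[ℂ] l2 X H, Isometry V ∧ Isometry W ∧
      (∀ x : X, ∃ η : H, V (delta x) = lp.single 2 x η) ∧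
      (∀ x : X, ∃ η : H, W (delta x) = lp.single 2 x η) ∧
      (1 - ε) * ‖a‖ ≤ ‖(ContinuousLinearMap.adjoint W) ∘L a ∘L V‖ ∧
      ‖(ContinuousLinearMap.adjoint W) ∘L a ∘L V‖ ≤ ‖a‖ := by
  obtain ⟨η₀, hη₀⟩ := hH
  obtain ⟨ζ₁, ζ₂, hζ₁, hζ₂, hζ⟩ := exists_norm_inner_apply_ge a hε
  obtain ⟨η₁, hη₁, f₁, hf₁, rfl⟩ := exists_diagonalIsometry_apply_eq (𝕜 := ℂ) hη₀ ζ₁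
  obtain ⟨η₂, hη₂, f₂, hf₂, rfl⟩ := exists_diagonalIsometry_apply_eq (𝕜 := ℂ) hη₀ ζ₂
  set V : l2 X ℂ →ₗᵢ[ℂ] l2 X H := diagonalIsometry η₁ hη₁
  set W : l2 X ℂ →ₗᵢ[ℂ] l2 X H := diagonalIsometry η₂ hη₂
  refine ⟨V.toContinuousLinearMap, W.toContinuousLinearMap, V.isometry, W.isometry,
    fun x => ⟨η₁ x, (diagonalIsometry_single η₁ hη₁ x 1).trans (by rw [one_smul])⟩,
    fun x => ⟨η₂ x, (diagonalIsometry_single η₂ hη₂ x 1).trans (by rw [one_smul])⟩,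
    ?_, norm_adjoint_comp_comp_le V W a⟩
  calc (1 - ε) * ‖a‖ ≤ ‖⟪W f₂, a (V f₁)⟫_ℂ‖ := hζ
    _ = ‖⟪f₂, (W.toContinuousLinearMap.adjoint ∘L a ∘L V.toContinuousLinearMap) f₁⟫_ℂ‖ := by
      rw [ContinuousLinearMap.comp_apply, ContinuousLinearMap.adjoint_inner_right]; rfl
    _ ≤ _ := norm_inner_apply_le_opNorm _ (hf₁.trans_le hζ₁) (hf₂.trans_le hζ₂)
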